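/- Let u₀ ∈ L¹(ℝ^N) with M = ∫_{ℝ^N} u₀(x) dx, and for t > 0 let u(x,t) = ∫_{ℝ^N} G(x-y,t) u₀(y) dy. Then the L¹ distance to the multiple of the heat kernel with the same mass tends to zero: lim_{t→∞} ∫_{ℝ^N} |u(x,t) - M·G(x,t)| dx = 0. -/

import Mathlib

open MeasureTheory Real Filter Topology Set

noncomputable section

/-- The Gaussian heat kernel on `ℝ^N`:
`G(x,t) = (4πt)^{-N/2} exp(-|x|²/(4t))`. -/
def heatKernel (N : ℕ) (x : EuclideanSpace ℝ (Fin N)) (t : ℝ) : ℝ :=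
  (4 * π * t) ^ (-(N : ℝ) / 2) * Real.exp (-‖x‖ ^ 2 / (4 * t))

/-!
Since `G(·, t)` has unit mass, `u(t) - M G(t) = ∫ (G(· - y, t) - G(·, t)) u₀(y) dy`, so by Fubini
`‖u(t) - M G(t)‖₁ ≤ ∫ ‖G(· - y, t) - G(·, t)‖₁ |u₀(y)| dy`. Parabolic scaling turns
`‖G(· - y, t) - G(·, t)‖₁` into `‖G(· - y/√t, 1) - G(·, 1)‖₁`, which tends to `0` as `t → ∞` by
continuity of translation in `L¹`, and is bounded by `2`; dominated convergence concludes.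
-/

section Translation

variable {G : Type*} [AddGroup G] [MeasurableSpace G]

def l1TranslateDist (μ : Measure G) (g : G → ℝ) (y : G) : ℝ :=
  ∫ x, |g (x - y) - g x| ∂μ

variable {μ : Measure G} {g f : G → ℝ}

lemma l1TranslateDist_le [MeasurableAdd G] [μ.IsAddRightInvariant] (hg : Integrable g μ)
    (y : G) :
    l1TranslateDist μ g y ≤ 2 * ∫ x, |g x| ∂μ := by
  have hgy : Integrable (fun x => |g (x - y)|) μ := (hg.comp_sub_right y).abs
  calc l1TranslateDist μ g y ≤ ∫ x, (|g (x - y)| + |g x|) ∂μ :=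
        integral_mono_of_nonneg (ae_of_all _ fun _ => abs_nonneg _) (hgy.add hg.abs)
          (ae_of_all _ fun x => abs_sub _ _)
    _ = 2 * ∫ x, |g x| ∂μ := by
        rw [integral_add hgy hg.abs, integral_sub_right_eq_self (fun x => |g x|) y, two_mul]

variable [MeasurableAdd₂ G] [MeasurableNeg G] [SFinite μ] [μ.IsAddRightInvariant]

lemma integrable_prod_translate_sub_mul (hg : Integrable g μ) (hf : Integrable f μ) :
    Integrable (fun p : G × G => (g (p.1 - p.2) - g p.1) * f p.2) (μ.prod μ) := by
  have hconv := hf.convolution_integrand (ContinuousLinearMap.mul ℝ ℝ) hg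
  simp only [ContinuousLinearMap.mul_apply'] at hconv
  refine (hconv.sub (hg.mul_prod hf)).congr (ae_of_all _ fun p => ?_)
  simp only [Pi.sub_apply]
  ring

lemma integrable_l1TranslateDist_mul_abs (hg : Integrable g μ) (hf : Integrable f μ) :
    Integrable (fun y => l1TranslateDist μ g y * |f y|) μ := by
  refine (integrable_prod_translate_sub_mul hg hf).norm.integral_prod_right.congr
    (ae_of_all _ fun y => ?_)
  simp only [Real.norm_eq_abs, abs_mul, integral_mul_const, l1TranslateDist]

lemma integral_abs_conv_sub_mul_le (hg : Integrable g μ) (hf : Integrable f μ) :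
    ∫ x, |(∫ y, g (x - y) * f y ∂μ) - (∫ y, f y ∂μ) * g x| ∂μ ≤
      ∫ y, l1TranslateDist μ g y * |f y| ∂μ := by
  have hF := integrable_prod_translate_sub_mul hg hf
  have hconv := hf.convolution_integrand (ContinuousLinearMap.mul ℝ ℝ) hg
  simp only [ContinuousLinearMap.mul_apply'] at hconv
  calc ∫ x, |(∫ y, g (x - y) * f y ∂μ) - (∫ y, f y ∂μ) * g x| ∂μ
      ≤ ∫ x, ∫ y, |(g (x - y) - g x) * f y| ∂μ ∂μ := by
        refine integral_mono_of_nonneg (ae_of_all _ fun _ => abs_nonneg _)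
          hF.abs.integral_prod_left ?_
        filter_upwards [hconv.prod_right_ae] with x hx
        have hmass : (∫ y, f y ∂μ) * g x = ∫ y, g x * f y ∂μ := by
          rw [integral_const_mul, mul_comm]
        simp_rw [hmass, sub_mul]
        rw [← integral_sub (hx.congr (ae_of_all _ fun y => mul_comm _ _)) (hf.const_mul _)]
        exact abs_integral_le_integral_abs
    _ = ∫ y, ∫ x, |(g (x - y) - g x) * f y| ∂μ ∂μ := integral_integral_swap hF.abs
    _ = ∫ y, l1TranslateDist μ g y * |f y| ∂μ := by
        simp only [abs_mul, integral_mul_const, l1TranslateDist]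

theorem tendsto_integral_abs_conv_sub_mul {ι : Type*} {l : Filter ι} [l.IsCountablyGenerated]
    {g : ι → G → ℝ} {C : ℝ} (hg : ∀ᶠ i in l, Integrable (g i) μ)
    (hC : ∀ᶠ i in l, ∫ x, |g i x| ∂μ ≤ C)
    (hlim : ∀ᵐ y ∂μ, Tendsto (fun i => l1TranslateDist μ (g i) y) l (𝓝 0))
    (hf : Integrable f μ) :
    Tendsto (fun i => ∫ x, |(∫ y, g i (x - y) * f y ∂μ) - (∫ y, f y ∂μ) * g i x| ∂μ) l
      (𝓝 0) := by
  have hB : Tendsto (fun i => ∫ y, l1TranslateDist μ (g i) y * |f y| ∂μ) l (𝓝 0) := by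
    have := tendsto_integral_filter_of_dominated_convergence (fun y => 2 * C * |f y|)
      (hg.mono fun i hgi => (integrable_l1TranslateDist_mul_abs hgi hf).aestronglyMeasurable)
      ((hg.and hC).mono fun i ⟨hgi, hCi⟩ => ae_of_all _ fun y => ?_)
      (hf.abs.const_mul _) (hlim.mono fun y hy => by simpa using hy.mul_const |f y|)
    · simpa using this
    · have hdist : l1TranslateDist μ (g i) y ≤ 2 * C :=
        (l1TranslateDist_le hgi y).trans (by linarith)
      rw [Real.norm_eq_abs, abs_of_nonneg (mul_nonneg (integral_nonneg fun _ => abs_nonneg _)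
        (abs_nonneg _))]
      exact mul_le_mul_of_nonneg_right hdist (abs_nonneg _)
  refine tendsto_of_tendsto_of_tendsto_of_le_of_le' tendsto_const_nhds hB
    (Eventually.of_forall fun _ => integral_nonneg fun _ => abs_nonneg _) ?_
  exact hg.mono fun i hgi => integral_abs_conv_sub_mul_le hgi hf

end Translation

section Continuity

variable {G : Type*} [AddGroup G] [TopologicalSpace G] [IsTopologicalAddGroup G]
  [FirstCountableTopology G] [MeasurableSpace G] [OpensMeasurableSpace G] {μ : Measure G}

theorem tendsto_l1TranslateDist_of_continuous {g h : G → ℝ} (hg : Continuous g)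
    (hh : Integrable h μ) (hbound : ∀ᶠ a in 𝓝 0, ∀ z, |g (z - a)| ≤ h z) :
    Tendsto (l1TranslateDist μ g) (𝓝 0) (𝓝 0) := by
  have hg0 : ∀ z, |g z| ≤ h z := by simpa using hbound.self_of_nhds
  have := tendsto_integral_filter_of_dominated_convergence (μ := μ)
    (F := fun a z => |g (z - a) - g z|) (fun z => 2 * h z)
    (Eventually.of_forall fun a =>
      ((hg.comp (continuous_id.sub continuous_const)).sub hg).abs.aestronglyMeasurable)
    (hbound.mono fun a ha => ae_of_all _ fun z => ?_) (hh.const_mul 2)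
    (ae_of_all _ fun z =>
      (((hg.comp (continuous_const.sub continuous_id)).sub continuous_const).abs.tendsto 0))
  · change Tendsto (fun a => ∫ z, |g (z - a) - g z| ∂μ) _ _
    simpa using this
  · rw [Real.norm_eq_abs, abs_abs]
    linarith [abs_sub (g (z - a)) (g z), ha z, hg0 z]

end Continuity

lemma l1TranslateDist_rescale {E : Type*} [NormedAddCommGroup E] [NormedSpace ℝ E]
    [MeasurableSpace E] [BorelSpace E] [FiniteDimensional ℝ E] (μ : Measure E)
    [μ.IsAddHaarMeasure] (g : E → ℝ) {R : ℝ} (hR : 0 < R) (y : E) :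
    l1TranslateDist μ (fun x => (R ^ Module.finrank ℝ E)⁻¹ * g (R⁻¹ • x)) y =
      l1TranslateDist μ g (R⁻¹ • y) := by
  have hRd : 0 < R ^ Module.finrank ℝ E := pow_pos hR _
  simp only [l1TranslateDist, smul_sub, ← mul_sub, abs_mul, abs_inv, abs_of_pos hRd]
  rw [integral_const_mul,
    Measure.integral_comp_inv_smul_of_nonneg μ (fun z => |g (z - R⁻¹ • y) - g z|) hR.le,
    smul_eq_mul, inv_mul_cancel_left₀ hRd.ne']

section HeatKernel

variable {N : ℕ}

lemma heatKernel_nonneg (x : EuclideanSpace ℝ (Fin N)) {t : ℝ} (ht : 0 ≤ t) :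
    0 ≤ heatKernel N x t := by
  unfold heatKernel
  positivity

lemma integral_heatKernel {t : ℝ} (ht : 0 < t) : ∫ x, heatKernel N x t = 1 := by
  have h4 : 0 < 4 * π * t := by positivity
  simp only [heatKernel, neg_div _ (‖_‖ ^ 2), div_eq_inv_mul (‖_‖ ^ 2), ← neg_mul]
  rw [integral_const_mul, GaussianFourier.integral_rexp_neg_mul_sq_norm (by positivity),
    finrank_euclideanSpace_fin, show π / (4 * t)⁻¹ = 4 * π * t by rw [div_inv_eq_mul]; ring,
    ← Real.rpow_add h4, neg_div, neg_add_cancel, Real.rpow_zero]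

lemma integrable_heatKernel {t : ℝ} (ht : 0 < t) : Integrable (heatKernel N · t) :=
  .of_integral_ne_zero (by rw [integral_heatKernel ht]; exact one_ne_zero)

lemma continuous_heatKernel (t : ℝ) : Continuous (heatKernel N · t) := by
  unfold heatKernel
  fun_prop

lemma heatKernel_eq_inv_mul_heatKernel_one {t : ℝ} (ht : 0 < t)
    (x : EuclideanSpace ℝ (Fin N)) :
    heatKernel N x t = ((√t) ^ N)⁻¹ * heatKernel N ((√t)⁻¹ • x) 1 := by
  have hs : 0 < √t := Real.sqrt_pos.mpr ht
  have hpow : t ^ (-(N : ℝ) / 2) = ((√t) ^ N)⁻¹ := by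
    rw [Real.sqrt_eq_rpow, ← Real.rpow_natCast, ← Real.rpow_mul ht.le, ← Real.rpow_neg ht.le]
    ring_nf
  have hnorm : ‖(√t)⁻¹ • x‖ ^ 2 = ‖x‖ ^ 2 / t := by
    rw [norm_smul, norm_inv, Real.norm_of_nonneg hs.le, mul_pow, inv_pow, Real.sq_sqrt ht.le]
    ring
  rw [heatKernel, heatKernel, hnorm, Real.mul_rpow (by positivity) ht.le, hpow, mul_one]
  ring_nf

lemma heatKernel_one_sub_le (z : EuclideanSpace ℝ (Fin N)) {a : EuclideanSpace ℝ (Fin N)}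
    (ha : ‖a‖ ≤ 1) :
    heatKernel N (z - a) 1 ≤
      (4 * π) ^ (-(N : ℝ) / 2) * exp (1 / 4) * exp (-(1 / 8) * ‖z‖ ^ 2) := by
  have hz : ‖z‖ - 1 ≤ ‖z - a‖ := (sub_le_sub_left ha _).trans (norm_sub_norm_le z a)
  have hsq : ‖z‖ ^ 2 ≤ (‖z - a‖ + 1) ^ 2 := pow_le_pow_left₀ (norm_nonneg z) (by linarith) 2
  rw [mul_assoc, ← Real.exp_add, heatKernel, mul_one]
  gcongr
  nlinarith [sq_nonneg (‖z - a‖ - 1)]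

lemma tendsto_l1TranslateDist_heatKernel_one :
    Tendsto (l1TranslateDist volume (heatKernel N · 1)) (𝓝 0) (𝓝 0) := by
  have hgauss : Integrable (fun z : EuclideanSpace ℝ (Fin N) => exp (-(1 / 8) * ‖z‖ ^ 2)) :=
    .of_integral_ne_zero (by
      rw [GaussianFourier.integral_rexp_neg_mul_sq_norm (by norm_num)]; positivity)
  refine tendsto_l1TranslateDist_of_continuous (continuous_heatKernel 1)
    (hgauss.const_mul ((4 * π) ^ (-(N : ℝ) / 2) * exp (1 / 4))) ?_
  filter_upwards [Metric.closedBall_mem_nhds 0 one_pos] with a ha z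
  rw [abs_of_nonneg (heatKernel_nonneg _ zero_le_one)]
  exact heatKernel_one_sub_le z (mem_closedBall_zero_iff.mp ha)

lemma tendsto_l1TranslateDist_heatKernel (y : EuclideanSpace ℝ (Fin N)) :
    Tendsto (fun t => l1TranslateDist volume (heatKernel N · t) y) atTop (𝓝 0) := by
  have hy : Tendsto (fun t : ℝ => (√t)⁻¹ • y) atTop (𝓝 0) := by
    simpa using (tendsto_inv_atTop_zero.comp tendsto_sqrt_atTop).smul_const y
  refine (tendsto_l1TranslateDist_heatKernel_one.comp hy).congr' ?_
  filter_upwards [eventually_gt_atTop 0] with t ht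
  have hscale := l1TranslateDist_rescale volume (heatKernel N · 1) (Real.sqrt_pos.mpr ht) y
  rw [finrank_euclideanSpace_fin] at hscale
  rw [Function.comp_apply, ← hscale]
  simp only [← heatKernel_eq_inv_mul_heatKernel_one ht]

end HeatKernel

theorem heat_equation_intermediate_asymptotics_general (N : ℕ)
    (u₀ : EuclideanSpace ℝ (Fin N) → ℝ) (hu₀ : Integrable u₀)
    (M : ℝ) (hM : M = ∫ x, u₀ x) :
    Tendsto (fun t : ℝ =>
        ∫ x, |(∫ y, heatKernel N (x - y) t * u₀ y) - M * heatKernel N x t|)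
      atTop (𝓝 0) := by
  subst hM
  refine tendsto_integral_abs_conv_sub_mul (g := fun t x => heatKernel N x t) (C := 1) ?_ ?_
    (ae_of_all _ tendsto_l1TranslateDist_heatKernel) hu₀
  · filter_upwards [eventually_gt_atTop 0] with t ht using integrable_heatKernel ht
  · filter_upwards [eventually_gt_atTop 0] with t ht
    simp only [abs_of_nonneg (heatKernel_nonneg _ ht.le), integral_heatKernel ht, le_refl]

/-- Intermediate asymptotics for the heat equation: if `u₀ ∈ L¹(ℝ^N)` has mass `M`,
then the solution `u(·,t) = G(·,t) ⋆ u₀` satisfies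
`‖u(·,t) - M G(·,t)‖_{L¹} → 0` as `t → ∞`. -/
theorem heat_equation_intermediate_asymptotics (N : ℕ) (hN : 1 ≤ N)
    (u₀ : EuclideanSpace ℝ (Fin N) → ℝ) (hu₀ : Integrable u₀)
    (M : ℝ) (hM : M = ∫ x, u₀ x) :
    Tendsto (fun t : ℝ =>
        ∫ x, |(∫ y, heatKernel N (x - y) t * u₀ y) - M * heatKernel N x t|)
      atTop (𝓝 0) :=
  heat_equation_intermediate_asymptotics_general N u₀ hu₀ M hM
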